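/- Let 𝒜 be a finite set of alternatives and let V be a finite set of valuations v : 𝒜 → ℝ that is single-crossing with respect to a total order ≻ᵛ on V and a total order ≻ᵃ on 𝒜. Let f : V → 𝒜 be monotone with respect to ≻ᵛ and ≻ᵃ, and let a₁ ≺ᵃ a₂ ≺ᵃ … ≺ᵃ a_r be the elements of the image of f, listed in increasing ≻ᵃ-order. Define P on the image of f by P(a₁) = 0 and, for 2 ≤ j ≤ r, P(a_j) = P(a_{j−1}) + min{ v(a_j) − v(a_{j−1}) : v ∈ V, f(v) = a_j }. Then for every v ∈ V and every j ∈ {1,…,r}: v(f(v)) − P(f(v)) ≥ v(a_j) − P(a_j); in particular these payments implement f. -/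
import Mathlib


/-- In a finite single-crossing domain, the payments defined by
`P(a₁) = 0` on the `≻ᵃ`-least element of the image of a monotone `f` and, for
consecutive elements `a ≺ᵃ a'` of the image,
`P(a') − P(a) = min { v(a') − v(a) : f(v) = a' }`, implement `f`:
for every valuation `v` and every alternative `a` in the image of `f`,
`v(f(v)) − P(f(v)) ≥ v(a) − P(a)`. -/
theorem payments_implement_monotone_f
    {A V : Type*} [Fintype A] [Fintype V] [LinearOrder A] [LinearOrder V]
    (val : V → A → ℝ)
    (hsc : ∀ v v' : V, v < v' → ∀ a a' : A, a < a' →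
      val v a' - val v a ≤ val v' a' - val v' a)
    (f : V → A)
    (hmono : ∀ v v' : V, v < v' → f v ≤ f v')
    (P : A → ℝ)
    (hbase : ∀ a ∈ Set.range f, (∀ b ∈ Set.range f, a ≤ b) → P a = 0)
    (hstep : ∀ a ∈ Set.range f, ∀ a' ∈ Set.range f, a < a' →
      (∀ b ∈ Set.range f, ¬(a < b ∧ b < a')) →
      ((∀ v : V, f v = a' → P a' - P a ≤ val v a' - val v a) ∧
       (∃ v : V, f v = a' ∧ P a' - P a = val v a' - val v a))) :
    ∀ v : V, ∀ a ∈ Set.range f, val v a - P a ≤ val v (f v) - P (f v) := by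
  classical
  intro v a ha
  set S : Finset A := Finset.univ.image f with hS
  have hmemS : ∀ x, x ∈ S ↔ x ∈ Set.range f := by
    intro x; simp [hS, Set.mem_range, eq_comm]
  -- upward claim
  have up : ∀ n : ℕ, ∀ a b : A, a ∈ Set.range f → b ∈ Set.range f → a ≤ b → b ≤ f v →
      (S.filter (fun x => a < x ∧ x ≤ b)).card ≤ n →
      val v a - P a ≤ val v b - P b := by
    intro n
    induction n with
    | zero =>
      intro a b haR hbR hab hbf hcard
      rcases eq_or_lt_of_le hab with h | h
      · subst h; exact le_refl _
      · exfalso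
        have hbmem : b ∈ S.filter (fun x => a < x ∧ x ≤ b) := by
          simp [Finset.mem_filter, (hmemS b).2 hbR, h]
        have := Finset.card_pos.2 ⟨b, hbmem⟩
        omega
    | succ n ih =>
      intro a b haR hbR hab hbf hcard
      rcases eq_or_lt_of_le hab with h | h
      · subst h; exact le_refl _
      · set T := S.filter (fun x => a ≤ x ∧ x < b) with hT
        have hTne : T.Nonempty :=
          ⟨a, by simp [hT, Finset.mem_filter, (hmemS a).2 haR, h]⟩
        set c := T.max' hTne with hc
        have hcT : c ∈ T := T.max'_mem hTne
        have hcS : c ∈ S ∧ a ≤ c ∧ c < b := by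
          simpa [hT, Finset.mem_filter] using hcT
        obtain ⟨hcS', hac, hcb⟩ := hcS
        have hcR : c ∈ Set.range f := (hmemS c).1 hcS'
        have hnob : ∀ d ∈ Set.range f, ¬(c < d ∧ d < b) := by
          rintro d hd ⟨h1, h2⟩
          have hdT : d ∈ T := by
            simp [hT, Finset.mem_filter, (hmemS d).2 hd,
              le_of_lt (lt_of_le_of_lt hac h1), h2]
          exact absurd (T.le_max' d hdT) (not_le.2 h1)
        obtain ⟨hmin, v₀, hv₀f, hv₀eq⟩ := hstep c hcR b hbR hcb hnob
        have hstepv : P b - P c ≤ val v b - val v c := by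
          rcases lt_trichotomy v₀ v with hlt | heq | hgt
          · have h2 := hsc v₀ v hlt c b hcb
            linarith
          · subst heq; linarith
          · have h3 : f v ≤ f v₀ := hmono v v₀ hgt
            have hfvb : f v = b := le_antisymm (hv₀f ▸ h3) hbf
            exact hmin v hfvb
        have hcard' : (S.filter (fun x => a < x ∧ x ≤ c)).card ≤ n := by
          have hsub : S.filter (fun x => a < x ∧ x ≤ c) ⊆
              S.filter (fun x => a < x ∧ x ≤ b) := by
            intro x hx
            simp only [Finset.mem_filter] at hx ⊢
            exact ⟨hx.1, hx.2.1, le_of_lt (lt_of_le_of_lt hx.2.2 hcb)⟩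
          have hbin : b ∈ S.filter (fun x => a < x ∧ x ≤ b) := by
            simp [Finset.mem_filter, (hmemS b).2 hbR, h]
          have hbout : b ∉ S.filter (fun x => a < x ∧ x ≤ c) := by
            simp only [Finset.mem_filter]
            rintro ⟨-, -, h4⟩
            exact absurd h4 (not_le.2 hcb)
          have hlt : (S.filter (fun x => a < x ∧ x ≤ c)).card <
              (S.filter (fun x => a < x ∧ x ≤ b)).card :=
            Finset.card_lt_card (Finset.ssubset_iff_of_subset hsub |>.2 ⟨b, hbin, hbout⟩)
          omega
        have := ih a c haR hcR hac (le_of_lt (lt_of_lt_of_le hcb hbf)) hcard'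
        linarith
  -- downward claim
  have down : ∀ n : ℕ, ∀ b a : A, b ∈ Set.range f → a ∈ Set.range f → b ≤ a → f v ≤ b →
      (S.filter (fun x => b ≤ x ∧ x < a)).card ≤ n →
      val v a - P a ≤ val v b - P b := by
    intro n
    induction n with
    | zero =>
      intro b a hbR haR hba hfb hcard
      rcases eq_or_lt_of_le hba with h | h
      · subst h; exact le_refl _
      · exfalso
        have hbmem : b ∈ S.filter (fun x => b ≤ x ∧ x < a) := by
          simp [Finset.mem_filter, (hmemS b).2 hbR, h]
        have := Finset.card_pos.2 ⟨b, hbmem⟩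
        omega
    | succ n ih =>
      intro b a hbR haR hba hfb hcard
      rcases eq_or_lt_of_le hba with h | h
      · subst h; exact le_refl _
      · set T := S.filter (fun x => b < x ∧ x ≤ a) with hT
        have hTne : T.Nonempty :=
          ⟨a, by simp [hT, Finset.mem_filter, (hmemS a).2 haR, h]⟩
        set c := T.min' hTne with hc
        have hcT : c ∈ T := T.min'_mem hTne
        have hcS : c ∈ S ∧ b < c ∧ c ≤ a := by
          simpa [hT, Finset.mem_filter] using hcT
        obtain ⟨hcS', hbc, hca⟩ := hcS
        have hcR : c ∈ Set.range f := (hmemS c).1 hcS'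
        have hnob : ∀ d ∈ Set.range f, ¬(b < d ∧ d < c) := by
          rintro d hd ⟨h1, h2⟩
          have hdT : d ∈ T := by
            simp [hT, Finset.mem_filter, (hmemS d).2 hd, h1,
              le_of_lt (lt_of_lt_of_le h2 hca)]
          exact absurd (T.min'_le d hdT) (not_le.2 h2)
        obtain ⟨hmin, v₀, hv₀f, hv₀eq⟩ := hstep b hbR c hcR hbc hnob
        have hvv₀ : v < v₀ := by
          rcases lt_trichotomy v v₀ with hlt | heq | hgt
          · exact hlt
          · exfalso; subst heq
            exact (ne_of_lt (lt_of_le_of_lt hfb hbc)) hv₀f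
          · exfalso
            have := hmono v₀ v hgt
            rw [hv₀f] at this
            exact absurd (le_trans this hfb) (not_le.2 hbc)
        have hstepv : val v c - val v b ≤ P c - P b := by
          have h2 := hsc v v₀ hvv₀ b c hbc
          linarith
        have hcard' : (S.filter (fun x => c ≤ x ∧ x < a)).card ≤ n := by
          have hsub : S.filter (fun x => c ≤ x ∧ x < a) ⊆
              S.filter (fun x => b ≤ x ∧ x < a) := by
            intro x hx
            simp only [Finset.mem_filter] at hx ⊢
            exact ⟨hx.1, le_trans (le_of_lt hbc) hx.2.1, hx.2.2⟩
          have hbin : b ∈ S.filter (fun x => b ≤ x ∧ x < a) := by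
            simp [Finset.mem_filter, (hmemS b).2 hbR, h]
          have hbout : b ∉ S.filter (fun x => c ≤ x ∧ x < a) := by
            simp only [Finset.mem_filter]
            rintro ⟨-, h4, -⟩
            exact absurd h4 (not_le.2 hbc)
          have hlt : (S.filter (fun x => c ≤ x ∧ x < a)).card <
              (S.filter (fun x => b ≤ x ∧ x < a)).card :=
            Finset.card_lt_card (Finset.ssubset_iff_of_subset hsub |>.2 ⟨b, hbin, hbout⟩)
          omega
        have := ih c a hcR haR hca (le_trans hfb (le_of_lt hbc)) hcard'
        linarith
  have hfvR : f v ∈ Set.range f := ⟨v, rfl⟩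
  rcases le_total a (f v) with h | h
  · exact up (S.filter (fun x => a < x ∧ x ≤ f v)).card a (f v) ha hfvR h le_rfl le_rfl
  · exact down (S.filter (fun x => f v ≤ x ∧ x < a)).card (f v) a hfvR ha h le_rfl le_rfl
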